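/- Let H be the support function of a convex body K of constant width 1 in ℝⁿ. Then for almost every u ≠ 0 where the Hessian exists, D²H(u) + D²H(−u) = (1/|u|)(I − u⊗u/|u|²). In particular the eigenvalues of D²H are bounded, so H is continuously differentiable away from the origin and DH is Lipschitz on {|u| ≥ r} for each r > 0. -/

import Mathlib

open Set Metric RealInnerProductSpace

noncomputable def suppFn {n : ℕ} (K : Set (EuclideanSpace ℝ (Fin n)))
    (u : EuclideanSpace ℝ (Fin n)) : ℝ :=
  sSup ((fun x => (inner ℝ x u : ℝ)) '' K)

def IsCW1 {n : ℕ} (K : Set (EuclideanSpace ℝ (Fin n))) : Prop :=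
  IsCompact K ∧ Convex ℝ K ∧ K.Nonempty ∧ ∀ u, suppFn K u + suppFn K (-u) = ‖u‖

/-!
Let `p_u ∈ K` maximise `⟪·, u⟫`. Constant width gives `‖p - q‖ ≤ 1` on `K` and
`⟪p_u - p_{-u}, u⟫ = ‖u‖`, so equality in Cauchy–Schwarz forces `p_u - p_{-u} = u / ‖u‖`.
Hence `H` is squeezed between `⟪p_u, ·⟫` and `‖·‖ + ⟪p_{-u}, ·⟫`, which agree at `u` and have
the same derivative there: `DH(u) = ⟪p_u, ·⟫`. Thus `DH(u) - DH(-u) = ⟪u / ‖u‖, ·⟫`, and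
differentiating this gives `D²H(u) + D²H(-u)`. For unit `u, v` the four points `p_{±u}, p_{±v}`
of a set of diameter `1` satisfy `‖p_u - p_v‖ ≤ ‖u - v‖`, which makes `DH` Lipschitz away from `0`.
-/

open Filter Topology Asymptotics

theorem HasFDerivAt.of_squeeze {E : Type*} [NormedAddCommGroup E] [NormedSpace ℝ E]
    {f g h : E → ℝ} {L : E →L[ℝ] ℝ} {u : E} (hf : HasFDerivAt f L u) (hh : HasFDerivAt h L u)
    (hfg : f ≤ g) (hgh : g ≤ h) (hfh : f u = h u) : HasFDerivAt g L u := by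
  have hgu : g u = f u := le_antisymm (hfh ▸ hgh u) (hfg u)
  rw [hasFDerivAt_iff_isLittleO_nhds_zero] at hf hh ⊢
  refine IsBigO.trans_isLittleO (isBigO_of_le' (c := 1) _ fun x => ?_)
    (hf.norm_left.add hh.norm_left)
  rw [one_mul, Real.norm_of_nonneg (add_nonneg (norm_nonneg _) (norm_nonneg _))]
  simp only [Real.norm_eq_abs]
  refine (abs_le_max_abs_abs ?_ ?_).trans (max_le_add_of_nonneg (abs_nonneg _) (abs_nonneg _))
  · linarith [hfg (u + x)]
  · linarith [hgh (u + x)]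

section InnerProductSpace

variable {E : Type*} [NormedAddCommGroup E] [InnerProductSpace ℝ E]

theorem inner_normalize_self (u : E) : ⟪NormedSpace.normalize u, u⟫ = ‖u‖ := by
  rcases eq_or_ne u 0 with rfl | hu
  · simp
  rw [NormedSpace.normalize, real_inner_smul_left, real_inner_self_eq_norm_sq]
  field_simp

theorem eq_normalize_of_norm_le_one_of_inner_eq {d u : E} (hu : u ≠ 0) (hd : ‖d‖ ≤ 1)
    (hdu : ⟪d, u⟫ = ‖u‖) : d = NormedSpace.normalize u := by
  have hnu : ‖u‖ ≠ 0 := norm_ne_zero_iff.mpr hu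
  have h₁ : ⟪d, NormedSpace.normalize u⟫ = 1 := by
    rw [NormedSpace.normalize, real_inner_smul_right, hdu, inv_mul_cancel₀ hnu]
  have h₂ : ‖d - NormedSpace.normalize u‖ ^ 2 ≤ 0 := by
    rw [norm_sub_sq_real, h₁, NormedSpace.norm_normalize hu]
    nlinarith [norm_nonneg d]
  rw [← sub_eq_zero, ← norm_eq_zero]
  exact pow_eq_zero_iff two_ne_zero |>.mp (le_antisymm h₂ (sq_nonneg _))

theorem norm_normalize_sub_normalize_le {u : E} (hu : u ≠ 0) (v : E) :
    ‖NormedSpace.normalize u - NormedSpace.normalize v‖ ≤ 2 * ‖u - v‖ / ‖u‖ := by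
  have hnu : 0 < ‖u‖ := norm_pos_iff.mpr hu
  have hsplit : NormedSpace.normalize u - NormedSpace.normalize v =
      ‖u‖⁻¹ • (u - v) + (‖u‖⁻¹ - ‖v‖⁻¹) • v := by
    rw [NormedSpace.normalize, NormedSpace.normalize, smul_sub, sub_smul]; abel
  have hrescale : ‖(‖u‖⁻¹ - ‖v‖⁻¹) • v‖ ≤ ‖u - v‖ / ‖u‖ := by
    rcases eq_or_ne v 0 with rfl | hv
    · simp [div_nonneg]
    have hnv : 0 < ‖v‖ := norm_pos_iff.mpr hv
    rw [norm_smul, Real.norm_eq_abs, inv_sub_inv hnu.ne' hnv.ne', abs_div,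
      abs_of_pos (mul_pos hnu hnv), div_mul_eq_mul_div, div_le_div_iff₀ (mul_pos hnu hnv) hnu,
      abs_sub_comm]
    calc |‖u‖ - ‖v‖| * ‖v‖ * ‖u‖ ≤ ‖u - v‖ * ‖v‖ * ‖u‖ := by
          gcongr; exact abs_norm_sub_norm_le u v
      _ = ‖u - v‖ * (‖u‖ * ‖v‖) := by ring
  calc ‖NormedSpace.normalize u - NormedSpace.normalize v‖ ≤ ‖u - v‖ / ‖u‖ + ‖u - v‖ / ‖u‖ := by
        rw [hsplit]
        refine (norm_add_le _ _).trans (add_le_add ?_ hrescale)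
        rw [norm_smul, norm_inv, norm_norm, inv_mul_eq_div]
    _ = 2 * ‖u - v‖ / ‖u‖ := by ring

theorem norm_sub_le_of_unit_chords {p₁ q₁ p₂ q₂ : E} (h₁ : ‖p₁ - q₁‖ = 1) (h₂ : ‖p₂ - q₂‖ = 1)
    (h₁₂ : ‖p₁ - q₂‖ ≤ 1) (h₂₁ : ‖p₂ - q₁‖ ≤ 1) : ‖p₁ - p₂‖ ≤ ‖(p₁ - q₁) - (p₂ - q₂)‖ := by
  set a := p₁ - q₁
  set b := p₂ - q₂
  set d := p₁ - p₂
  have ha : ‖a - d‖ ≤ 1 := by simpa [a, d] using h₂₁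
  have hb : ‖b + d‖ ≤ 1 := by simpa [b, d, sub_add_sub_cancel'] using h₁₂
  -- expanding `‖a - d‖² ≤ 1` and `‖b + d‖² ≤ 1` with `‖a‖ = ‖b‖ = 1`
  have key : ‖d‖ ^ 2 ≤ ⟪a - b, d⟫ := by
    rw [inner_sub_left]
    nlinarith [norm_sub_sq_real a d, norm_add_sq_real b d, norm_nonneg (a - d),
      norm_nonneg (b + d)]
  nlinarith [real_inner_le_norm (a - b) d, norm_nonneg d, norm_nonneg (a - b)]

theorem hasFDerivAt_norm {u : E} (hu : u ≠ 0) :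
    HasFDerivAt (‖·‖) (innerSL ℝ (NormedSpace.normalize u)) u := by
  have hsq : ‖u‖ ^ 2 ≠ 0 := pow_ne_zero _ (norm_ne_zero_iff.mpr hu)
  have h := (Real.hasDerivAt_sqrt hsq).comp_hasFDerivAt u (hasStrictFDerivAt_norm_sq u).hasFDerivAt
  simp only [Function.comp_def, Real.sqrt_sq (norm_nonneg _)] at h
  refine h.congr_fderiv ?_
  ext v
  simp [NormedSpace.normalize]
  ring

theorem hasFDerivAt_inner_normalize {u : E} (hu : u ≠ 0) (z : E) :
    HasFDerivAt (fun w => ⟪NormedSpace.normalize w, z⟫)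
      (‖u‖⁻¹ • (innerSL ℝ z - (⟪u, z⟫ / ‖u‖ ^ 2) • innerSL ℝ u)) u := by
  have hnu : ‖u‖ ≠ 0 := norm_ne_zero_iff.mpr hu
  have hfun : (fun w : E => ⟪NormedSpace.normalize w, z⟫) = fun w => ‖w‖⁻¹ * ⟪z, w⟫ := by
    funext w; rw [NormedSpace.normalize, real_inner_smul_left, real_inner_comm]
  rw [hfun]
  refine (((hasDerivAt_inv hnu).comp_hasFDerivAt u (hasFDerivAt_norm hu)).mul
    (innerSL ℝ z).hasFDerivAt).congr_fderiv ?_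
  ext v
  simp [NormedSpace.normalize, real_inner_comm]
  field_simp
  ring

theorem fderiv_add_fderiv_neg_apply {F : E → E →L[ℝ] ℝ} {u : E} (hu : u ≠ 0)
    (hF : ∀ w ≠ 0, F w - F (-w) = innerSL ℝ (NormedSpace.normalize w))
    (hd : DifferentiableAt ℝ F u) (hd' : DifferentiableAt ℝ F (-u)) (v z : E) :
    fderiv ℝ F u v z + fderiv ℝ F (-u) v z = ‖u‖⁻¹ * (⟪v, z⟫ - ⟪u, v⟫ * ⟪u, z⟫ / ‖u‖ ^ 2) := by
  have hΦ : HasFDerivAt (fun w => F w z - F (-w) z)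
      ((ContinuousLinearMap.apply ℝ ℝ z).comp (fderiv ℝ F u) -
        ((ContinuousLinearMap.apply ℝ ℝ z).comp (fderiv ℝ F (-u))).comp
          (-ContinuousLinearMap.id ℝ E)) u :=
    ((ContinuousLinearMap.apply ℝ ℝ z).hasFDerivAt.comp u hd.hasFDerivAt).sub
      ((ContinuousLinearMap.apply ℝ ℝ z).hasFDerivAt.comp u
        (hd'.hasFDerivAt.comp u (hasFDerivAt_id u).neg))
  have hΦ_eq : (fun w => F w z - F (-w) z) =ᶠ[𝓝 u] fun w => ⟪NormedSpace.normalize w, z⟫ := by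
    filter_upwards [eventually_ne_nhds hu] with w hw
    rw [← sub_apply, hF w hw, innerSL_apply_apply]
  have h := congrArg (· v) ((hΦ.congr_of_eventuallyEq hΦ_eq.symm).unique
    (hasFDerivAt_inner_normalize hu z))
  simp only [sub_apply, ContinuousLinearMap.comp_apply, neg_apply, ContinuousLinearMap.id_apply,
    ContinuousLinearMap.apply_apply, map_neg, sub_neg_eq_add, smul_apply, innerSL_apply_apply,
    smul_eq_mul] at h
  rw [h, real_inner_comm v z]
  ring

end InnerProductSpace

section SupportFunction

variable {n : ℕ} {K : Set (EuclideanSpace ℝ (Fin n))}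

theorem inner_le_suppFn (hK : IsCompact K) {p : EuclideanSpace ℝ (Fin n)} (hp : p ∈ K)
    (u : EuclideanSpace ℝ (Fin n)) : ⟪p, u⟫ ≤ suppFn K u :=
  le_csSup (hK.bddAbove_image (continuous_id.inner continuous_const).continuousOn)
    (mem_image_of_mem _ hp)

theorem exists_inner_eq_suppFn (hK : IsCompact K) (hne : K.Nonempty)
    (u : EuclideanSpace ℝ (Fin n)) : ∃ p ∈ K, ⟪p, u⟫ = suppFn K u :=
  (hK.image (continuous_id.inner continuous_const)).sSup_mem (hne.image _)

namespace IsCW1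

theorem inner_sub_le_norm (hK : IsCW1 K) {p q : EuclideanSpace ℝ (Fin n)} (hp : p ∈ K)
    (hq : q ∈ K) (u : EuclideanSpace ℝ (Fin n)) : ⟪p - q, u⟫ ≤ ‖u‖ := by
  have hp' := inner_le_suppFn hK.1 hp u
  have hq' := inner_le_suppFn hK.1 hq (-u)
  rw [inner_neg_right] at hq'
  rw [inner_sub_left, ← hK.2.2.2 u]
  linarith

theorem norm_sub_le_one (hK : IsCW1 K) {p q : EuclideanSpace ℝ (Fin n)} (hp : p ∈ K)
    (hq : q ∈ K) : ‖p - q‖ ≤ 1 := by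
  have h := hK.inner_sub_le_norm hp hq (p - q)
  rw [real_inner_self_eq_norm_sq] at h
  nlinarith [norm_nonneg (p - q)]

theorem suppFn_le_norm_add_inner (hK : IsCW1 K) {q : EuclideanSpace ℝ (Fin n)} (hq : q ∈ K)
    (v : EuclideanSpace ℝ (Fin n)) : suppFn K v ≤ ‖v‖ + ⟪q, v⟫ := by
  have h := inner_le_suppFn hK.1 hq (-v)
  rw [inner_neg_right] at h
  linarith [hK.2.2.2 v]

theorem exists_sub_eq_normalize (hK : IsCW1 K) {u : EuclideanSpace ℝ (Fin n)} (hu : u ≠ 0) :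
    ∃ p ∈ K, ∃ q ∈ K, p - q = NormedSpace.normalize u := by
  obtain ⟨p, hp, hpu⟩ := exists_inner_eq_suppFn hK.1 hK.2.2.1 u
  obtain ⟨q, hq, hqu⟩ := exists_inner_eq_suppFn hK.1 hK.2.2.1 (-u)
  refine ⟨p, hp, q, hq, eq_normalize_of_norm_le_one_of_inner_eq hu (hK.norm_sub_le_one hp hq) ?_⟩
  rw [inner_neg_right] at hqu
  rw [inner_sub_left, ← hK.2.2.2 u]
  linarith

theorem hasFDerivAt_suppFn (hK : IsCW1 K) {p q u : EuclideanSpace ℝ (Fin n)} (hp : p ∈ K)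
    (hq : q ∈ K) (hpq : p - q = NormedSpace.normalize u) (hu : u ≠ 0) :
    HasFDerivAt (suppFn K) (innerSL ℝ p) u := by
  have hupper : HasFDerivAt (fun v => ‖v‖ + ⟪q, v⟫) (innerSL ℝ p) u := by
    rw [eq_add_of_sub_eq hpq, map_add]
    exact (hasFDerivAt_norm hu).add (innerSL ℝ q).hasFDerivAt
  refine (innerSL ℝ p).hasFDerivAt.of_squeeze hupper (fun v => inner_le_suppFn hK.1 hp v)
    (hK.suppFn_le_norm_add_inner hq) ?_
  rw [innerSL_apply_apply, eq_add_of_sub_eq hpq, inner_add_left, inner_normalize_self, add_comm]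

theorem fderiv_suppFn_sub_fderiv_suppFn_neg (hK : IsCW1 K) {u : EuclideanSpace ℝ (Fin n)}
    (hu : u ≠ 0) :
    fderiv ℝ (suppFn K) u - fderiv ℝ (suppFn K) (-u) = innerSL ℝ (NormedSpace.normalize u) := by
  obtain ⟨p, hp, q, hq, hpq⟩ := hK.exists_sub_eq_normalize hu
  have hqp : q - p = NormedSpace.normalize (-u) := by
    rw [NormedSpace.normalize_neg, ← hpq, neg_sub]
  rw [(hK.hasFDerivAt_suppFn hp hq hpq hu).fderiv,
    (hK.hasFDerivAt_suppFn hq hp hqp (neg_ne_zero.mpr hu)).fderiv, ← map_sub, hpq]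

theorem norm_fderiv_suppFn_sub_le (hK : IsCW1 K) {u v : EuclideanSpace ℝ (Fin n)} (hu : u ≠ 0)
    (hv : v ≠ 0) :
    ‖fderiv ℝ (suppFn K) u - fderiv ℝ (suppFn K) v‖ ≤
      ‖NormedSpace.normalize u - NormedSpace.normalize v‖ := by
  obtain ⟨p₁, hp₁, q₁, hq₁, h₁⟩ := hK.exists_sub_eq_normalize hu
  obtain ⟨p₂, hp₂, q₂, hq₂, h₂⟩ := hK.exists_sub_eq_normalize hv
  rw [(hK.hasFDerivAt_suppFn hp₁ hq₁ h₁ hu).fderiv, (hK.hasFDerivAt_suppFn hp₂ hq₂ h₂ hv).fderiv,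
    ← map_sub, innerSL_apply_norm, ← h₁, ← h₂]
  exact norm_sub_le_of_unit_chords (by rw [h₁, NormedSpace.norm_normalize hu])
    (by rw [h₂, NormedSpace.norm_normalize hv]) (hK.norm_sub_le_one hp₁ hq₂)
    (hK.norm_sub_le_one hp₂ hq₁)

theorem lipschitzOnWith_fderiv_suppFn (hK : IsCW1 K) {r : ℝ} (hr : 0 < r) :
    LipschitzOnWith (2 / r).toNNReal (fderiv ℝ (suppFn K)) {u | r ≤ ‖u‖} := by
  refine LipschitzOnWith.of_dist_le_mul fun u hu v hv => ?_
  have hu' : 0 < ‖u‖ := hr.trans_le hu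
  rw [dist_eq_norm, dist_eq_norm, Real.coe_toNNReal _ (by positivity)]
  calc ‖fderiv ℝ (suppFn K) u - fderiv ℝ (suppFn K) v‖
      ≤ ‖NormedSpace.normalize u - NormedSpace.normalize v‖ :=
        hK.norm_fderiv_suppFn_sub_le (norm_pos_iff.mp hu')
          (norm_pos_iff.mp (hr.trans_le hv))
    _ ≤ 2 * ‖u - v‖ / ‖u‖ := norm_normalize_sub_normalize_le (norm_pos_iff.mp hu') v
    _ ≤ 2 * ‖u - v‖ / r := by gcongr; exact hu
    _ = 2 / r * ‖u - v‖ := by ring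

theorem continuousOn_fderiv_suppFn (hK : IsCW1 K) :
    ContinuousOn (fderiv ℝ (suppFn K)) {u | u ≠ 0} := by
  intro u hu
  have hr : 0 < ‖u‖ / 2 := half_pos (norm_pos_iff.mpr hu)
  have hnhds : {w | ‖u‖ / 2 ≤ ‖w‖} ∈ 𝓝 u :=
    (continuousAt_const.eventually_lt continuous_norm.continuousAt
      (half_lt_self (norm_pos_iff.mpr hu))).mono fun _ => le_of_lt
  exact ((hK.lipschitzOnWith_fderiv_suppFn hr).continuousOn.continuousAt hnhds).continuousWithinAt

end IsCW1

end SupportFunction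

theorem stmt_12 {n : ℕ} (K : Set (EuclideanSpace ℝ (Fin n))) (hK : IsCW1 K)
    (H : EuclideanSpace ℝ (Fin n) → ℝ) (hH : H = suppFn K) :
    (∀ u : EuclideanSpace ℝ (Fin n), u ≠ 0 →
      DifferentiableAt ℝ (fderiv ℝ H) u → DifferentiableAt ℝ (fderiv ℝ H) (-u) →
      ∀ v w : EuclideanSpace ℝ (Fin n),
        fderiv ℝ (fderiv ℝ H) u v w + fderiv ℝ (fderiv ℝ H) (-u) v w =
          ‖u‖⁻¹ * (⟪v, w⟫ - ⟪u, v⟫ * ⟪u, w⟫ / ‖u‖ ^ 2)) ∧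
    ContinuousOn (fderiv ℝ H) {u | u ≠ 0} ∧
    (∀ r : ℝ, 0 < r → ∃ L : NNReal, LipschitzOnWith L (fderiv ℝ H) {u | r ≤ ‖u‖}) := by
  subst hH
  refine ⟨fun u hu hd hd' v w => ?_, hK.continuousOn_fderiv_suppFn,
    fun r hr => ⟨_, hK.lipschitzOnWith_fderiv_suppFn hr⟩⟩
  exact fderiv_add_fderiv_neg_apply hu (fun w hw => hK.fderiv_suppFn_sub_fderiv_suppFn_neg hw)
    hd hd' v w
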